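/- For every quantum channel C from a finite-dimensional system A to a finite-dimensional system B and every error tolerance ε ≥ 0, the one-shot classical simulation cost assisted by free general supermaps equals the one assisted by free parallel supermaps: S_ε^Free(C) = S_ε^FreePar(C). -/

import Mathlib

open Matrix
open scoped Classical ComplexOrder

namespace ICO

section Toolkit

variable {N : ℕ} {κX κY : Fin N → Type}
  [∀ j, Fintype (κX j)] [∀ j, DecidableEq (κX j)]
  [∀ j, Fintype (κY j)] [∀ j, DecidableEq (κY j)]
  {R : Type} [Fintype R]

/-- Smoothing over the factor `Y j` (with spectator `R`). -/
noncomputable def floorY (j : Fin N)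
    (P : Matrix (((∀ i, κX i) × (∀ i, κY i)) × R) (((∀ i, κX i) × (∀ i, κY i)) × R) ℂ) :
    Matrix (((∀ i, κX i) × (∀ i, κY i)) × R) (((∀ i, κX i) × (∀ i, κY i)) × R) ℂ :=
  Matrix.of fun p q =>
    if p.1.2 j = q.1.2 j then
      (Fintype.card (κY j) : ℂ)⁻¹ *
        ∑ c : κY j, P ((p.1.1, Function.update p.1.2 j c), p.2)
          ((q.1.1, Function.update q.1.2 j c), q.2)
    else 0

/-- Smoothing over the factors `X j ⊗ Y j` (with spectator `R`). -/
noncomputable def floorXY (j : Fin N)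
    (P : Matrix (((∀ i, κX i) × (∀ i, κY i)) × R) (((∀ i, κX i) × (∀ i, κY i)) × R) ℂ) :
    Matrix (((∀ i, κX i) × (∀ i, κY i)) × R) (((∀ i, κX i) × (∀ i, κY i)) × R) ℂ :=
  Matrix.of fun p q =>
    if p.1.1 j = q.1.1 j ∧ p.1.2 j = q.1.2 j then
      ((Fintype.card (κX j) : ℂ) * (Fintype.card (κY j) : ℂ))⁻¹ *
        ∑ a : κX j, ∑ c : κY j,
          P ((Function.update p.1.1 j a, Function.update p.1.2 j c), p.2)
            ((Function.update q.1.1 j a, Function.update q.1.2 j c), q.2)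
    else 0

/-- `L^NS_{XY} := L^NS_{X₁Y₁} ∘ ⋯ ∘ L^NS_{X_NY_N}` (with spectator `R`). -/
noncomputable def LNS
    (P : Matrix (((∀ i, κX i) × (∀ i, κY i)) × R) (((∀ i, κX i) × (∀ i, κY i)) × R) ℂ) :
    Matrix (((∀ i, κX i) × (∀ i, κY i)) × R) (((∀ i, κX i) × (∀ i, κY i)) × R) ℂ :=
  (List.finRange N).foldr (fun j Q => Q - floorY j Q + floorXY j Q) P

/-- Smoothing over the whole factor `Y = Y₁⊗⋯⊗Y_N` (with spectator `R`). -/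
noncomputable def floorYall
    (P : Matrix (((∀ i, κX i) × (∀ i, κY i)) × R) (((∀ i, κX i) × (∀ i, κY i)) × R) ℂ) :
    Matrix (((∀ i, κX i) × (∀ i, κY i)) × R) (((∀ i, κX i) × (∀ i, κY i)) × R) ℂ :=
  Matrix.of fun p q =>
    if p.1.2 = q.1.2 then
      (Fintype.card (∀ i, κY i) : ℂ)⁻¹ *
        ∑ c : ∀ i, κY i, P ((p.1.1, c), p.2) ((q.1.1, c), q.2)
    else 0

/-- Partial trace over the last factor `B`. -/
noncomputable def trB {W A B : Type} [Fintype B]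
    (J : Matrix (W × (A × B)) (W × (A × B)) ℂ) : Matrix (W × A) (W × A) ℂ :=
  Matrix.of fun p q => ∑ b : B, J (p.1, (p.2, b)) (q.1, (q.2, b))

/-- No Forward Signaling: `tr_X J = (tr_{XA} J) ⊗ (I_A/d_A)`. -/
def NFS {A B : Type} [Fintype A] [DecidableEq A] [Fintype B]
    (J : Matrix (((∀ i, κX i) × (∀ i, κY i)) × (A × B))
         (((∀ i, κX i) × (∀ i, κY i)) × (A × B)) ℂ) : Prop :=
  ∀ (y y' : ∀ i, κY i) (a a' : A) (b b' : B),
    (∑ x : ∀ i, κX i, J ((x, y), (a, b)) ((x, y'), (a', b'))) =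
      if a = a' then
        (Fintype.card A : ℂ)⁻¹ *
          ∑ x : ∀ i, κX i, ∑ c : A, J ((x, y), (c, b)) ((x, y'), (c, b'))
      else 0

/-- Membership in `Free`. -/
def FreeCond {A B : Type} [Fintype A] [DecidableEq A] [Fintype B] [DecidableEq B]
    (J : Matrix (((∀ i, κX i) × (∀ i, κY i)) × (A × B))
         (((∀ i, κX i) × (∀ i, κY i)) × (A × B)) ℂ) : Prop :=
  J.PosSemidef ∧
  LNS (trB J) = (Fintype.card (∀ i, κX i) : ℂ)⁻¹ • 1 ∧
  NFS J

/-- Membership in `FreePar`. -/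
def FreeParCond {A B : Type} [Fintype A] [DecidableEq A] [Fintype B] [DecidableEq B]
    (J : Matrix (((∀ i, κX i) × (∀ i, κY i)) × (A × B))
         (((∀ i, κX i) × (∀ i, κY i)) × (A × B)) ℂ) : Prop :=
  J.PosSemidef ∧
  trB J = floorYall (trB J) ∧
  (Matrix.of fun (a a' : A) =>
      ∑ w : (∀ i, κX i) × (∀ i, κY i), ∑ b : B, J (w, (a, b)) (w, (a', b))) =
    ((Fintype.card (∀ i, κY i) : ℂ)) • (1 : Matrix A A ℂ) ∧
  NFS J

end Toolkit

/-- The link product `J ⋆ K := tr_{XY}[J·(Kᵀ⊗I_{AB})]`, an operator on `A ⊗ B`. -/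
noncomputable def linkOut {W AB : Type} [Fintype W]
    (J : Matrix (W × AB) (W × AB) ℂ) (K : Matrix W W ℂ) : Matrix AB AB ℂ :=
  Matrix.of fun u v => ∑ w : W, ∑ w' : W, J (w, u) (w', v) * K w w'

/-- Trace norm of a Hermitian matrix. -/
noncomputable def traceNorm {n : Type} [Fintype n] [DecidableEq n]
    (H : Matrix n n ℂ) : ℝ :=
  if h : H.IsHermitian then ∑ i, |h.eigenvalues i| else 0

/-- A density matrix: positive semidefinite with unit trace. -/
def IsDensity {n : Type} [Fintype n] (ρ : Matrix n n ℂ) : Prop :=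
  ρ.PosSemidef ∧ ρ.trace = 1

/-- Action of the channel with Choi operator `J` on a state of R'⊗A. -/
noncomputable def applyChoi {A B R' : Type} [Fintype A]
    (J : Matrix (A × B) (A × B) ℂ) (ρ : Matrix (R' × A) (R' × A) ℂ) :
    Matrix (R' × B) (R' × B) ℂ :=
  Matrix.of fun p q => ∑ a : A, ∑ a' : A, ρ (p.1, a) (q.1, a') * J (a, p.2) (a', q.2)

/-- Half the diamond distance, with a reference system of dimension d_A. -/
noncomputable def dDist {A B : Type} [Fintype A] [DecidableEq A] [Fintype B] [DecidableEq B]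
    (J₁ J₂ : Matrix (A × B) (A × B) ℂ) : ℝ :=
  sSup { t : ℝ | ∃ ρ : Matrix (A × A) (A × A) ℂ, IsDensity ρ ∧
    t = (1 / 2) * traceNorm (applyChoi J₁ ρ - applyChoi J₂ ρ) }

/-- Choi operator of the list of ideal classical channels `(Δ^{m₁}, …, Δ^{m_N})`. -/
noncomputable def JDeltaProd {n : ℕ} (mv : Fin n → ℕ) :
    Matrix ((∀ j, Fin (mv j)) × (∀ j, Fin (mv j)))
      ((∀ j, Fin (mv j)) × (∀ j, Fin (mv j))) ℂ :=
  Matrix.of fun u v =>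
    ∏ j, (if u.1 j = u.2 j ∧ v.1 j = v.2 j ∧ u.1 j = v.1 j then (1 : ℂ) else 0)

/-!
Both kinds of simulator enter the cost only through the simulated channel
`Σ_x J_{(x,x)}`, and each of them satisfies the same four properties: `J ⪰ 0`, no forward
signalling, `tr_{XYB} J = d_Y I_A`, and `Σ_x tr_B J_{(x,x)} = I_A`. For `Free` the last two
hold because every factor `Q ↦ Q - ⌊Y_j⌋Q + ⌊X_jY_j⌋Q` of `L^NS` preserves both the sum of all
diagonal blocks and the sum of the matched diagonal blocks `(x,x)`; for `FreePar` they follow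
from the normalisation and from `⌊Y⌋`-invariance.

Conversely, from these four properties the block-diagonal operator whose matched blocks are all
equal to the average matched block of `J`, and whose mismatched blocks are all equal to the
average mismatched block, has `B`-marginal `I/d_X`. It therefore lies in `Free` and in
`FreePar` at once and simulates the same channel with the same message sizes, so the two sets
of achievable costs coincide.
-/

open Finset

lemma _root_.Function.update_eq_update_iff_of_eq {ι : Type} [DecidableEq ι] {β : ι → Type}
    {f g : ∀ i, β i} {i : ι} (h : f i = g i) (b : β i) :
    Function.update f i b = Function.update g i b ↔ f = g := by
  refine ⟨fun H => ?_, fun H => H ▸ rfl⟩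
  calc f = Function.update (Function.update f i b) i (f i) := by simp
    _ = Function.update (Function.update g i b) i (g i) := by rw [H, h]
    _ = g := by simp

lemma _root_.Fintype.sum_sum_update {ι M : Type} [DecidableEq ι] [AddCommMonoid M]
    {κ : ι → Type} [Fintype (∀ i, κ i)] (j : ι) [Fintype (κ j)] (f : (∀ i, κ i) → M) :
    ∑ y, ∑ c : κ j, f (Function.update y j c) = Fintype.card (κ j) • ∑ y, f y := by
  let e : (∀ i, κ i) × κ j ≃ (∀ i, κ i) × κ j :=
    ⟨fun p => (Function.update p.1 j p.2, p.1 j), fun p => (Function.update p.1 j p.2, p.1 j),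
      fun p => by simp, fun p => by simp⟩
  rw [← Fintype.sum_prod_type', ← e.sum_comp]
  simp [e, Fintype.sum_prod_type, Finset.smul_sum]

section Blocks

variable {W U : Type}

def blockSum (s : Finset W) : Matrix (W × U) (W × U) ℂ →ₗ[ℂ] Matrix U U ℂ where
  toFun J := Matrix.of fun u v => ∑ w ∈ s, J (w, u) (w, v)
  map_add' J K := by ext; simp [Finset.sum_add_distrib]
  map_smul' c J := by ext; simp [Finset.mul_sum]

@[simp]
lemma blockSum_apply (s : Finset W) (J : Matrix (W × U) (W × U) ℂ) (u v : U) :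
    blockSum s J u v = ∑ w ∈ s, J (w, u) (w, v) := rfl

lemma blockSum_smul_one [DecidableEq W] [DecidableEq U] (s : Finset W) (c : ℂ) :
    blockSum s (c • 1 : Matrix (W × U) (W × U) ℂ) = (#s * c) • 1 := by
  ext u v
  by_cases h : u = v <;> simp [h]

lemma posSemidef_blockSum [Fintype U] {J : Matrix (W × U) (W × U) ℂ} (hJ : J.PosSemidef)
    (s : Finset W) : (blockSum s J).PosSemidef := by
  have : blockSum s J = ∑ w ∈ s, J.submatrix (Prod.mk w) (Prod.mk w) := by
    ext u v
    simp [Matrix.sum_apply]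
  rw [this]
  exact Matrix.posSemidef_sum s fun w _ => hJ.submatrix _

lemma sum_blockSum_apply {A B : Type} [Fintype B] (s : Finset W)
    (J : Matrix (W × (A × B)) (W × (A × B)) ℂ) (a a' : A) :
    ∑ b, blockSum s J (a, b) (a', b) = blockSum s (trB J) a a' := by
  simp [trB, Finset.sum_comm (γ := B)]

variable [Fintype W] [DecidableEq W]

open scoped Kronecker in
def blockDiag (G : W → Matrix U U ℂ) : Matrix (W × U) (W × U) ℂ :=
  ∑ w, Matrix.single w w 1 ⊗ₖ G w

@[simp]
lemma blockDiag_apply (G : W → Matrix U U ℂ) (p q : W × U) :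
    blockDiag G p q = if p.1 = q.1 then G p.1 p.2 q.2 else 0 := by
  by_cases h : p.1 = q.1
  · simp [blockDiag, Matrix.sum_apply, Matrix.single_apply, h]
  · simp only [blockDiag, Matrix.sum_apply, Matrix.kroneckerMap_apply, Matrix.single_apply, h,
      if_false]
    exact Finset.sum_eq_zero fun w _ => by
      rw [if_neg fun hw => h (hw.1.symm.trans hw.2), zero_mul]

lemma posSemidef_blockDiag [Fintype U] {G : W → Matrix U U ℂ} (hG : ∀ w, (G w).PosSemidef) :
    (blockDiag G).PosSemidef :=
  Matrix.posSemidef_sum _ fun w _ =>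
    .kronecker (Matrix.diagonal_single w (1 : ℂ) ▸ .diagonal (Pi.single_nonneg.mpr zero_le_one))
      (hG w)

lemma trB_blockDiag {A B : Type} [Fintype B] (G : W → Matrix (A × B) (A × B) ℂ) (w w' : W)
    (a a' : A) :
    trB (blockDiag G) (w, a) (w', a') = if w = w' then ∑ b, G w (a, b) (a', b) else 0 := by
  by_cases h : w = w' <;> simp [trB, h]

end Blocks

section SmoothingScalar

variable {N : ℕ} {κX κY : Fin N → Type} [∀ j, DecidableEq (κX j)]
  [∀ j, Fintype (κY j)] [∀ j, DecidableEq (κY j)] {R : Type} [DecidableEq R]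

lemma floorY_smul_one (j : Fin N) (c : ℂ) :
    floorY (κX := κX) (κY := κY) (R := R) j (c • 1) = c • 1 := by
  ext p q
  have : Nonempty (κY j) := ⟨p.1.2 j⟩
  by_cases h : p.1.2 j = q.1.2 j
  · simp [floorY, h, Matrix.one_apply, Prod.ext_iff, Function.update_eq_update_iff_of_eq h]
  · have : p ≠ q := fun hpq => h (hpq ▸ rfl)
    simp [floorY, h, this]

lemma floorXY_smul_one [∀ j, Fintype (κX j)] (j : Fin N) (c : ℂ) :
    floorXY (κX := κX) (κY := κY) (R := R) j (c • 1) = c • 1 := by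
  ext p q
  have : Nonempty (κX j) := ⟨p.1.1 j⟩
  have : Nonempty (κY j) := ⟨p.1.2 j⟩
  by_cases h : p.1.1 j = q.1.1 j ∧ p.1.2 j = q.1.2 j
  · simp [floorXY, h, Matrix.one_apply, Prod.ext_iff, Function.update_eq_update_iff_of_eq h.1,
      Function.update_eq_update_iff_of_eq h.2, ← mul_assoc]
  · have : p ≠ q := fun hpq => h (hpq ▸ ⟨rfl, rfl⟩)
    simp only [floorXY, Matrix.of_apply, if_neg h]
    simp [this]

lemma LNS_smul_one [∀ j, Fintype (κX j)] (c : ℂ) :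
    LNS (κX := κX) (κY := κY) (R := R) (c • 1) = c • 1 := by
  unfold LNS
  induction List.finRange N with
  | nil => rfl
  | cons j l ih => rw [List.foldr_cons, ih, floorY_smul_one, floorXY_smul_one, sub_add_cancel]

lemma floorYall_smul_one (c : ℂ) :
    floorYall (κX := κX) (κY := κY) (R := R) (c • 1) = c • 1 := by
  ext p q
  have : Nonempty (∀ i, κY i) := ⟨p.1.2⟩
  by_cases h : p.1.2 = q.1.2
  · simp [floorYall, h, Matrix.one_apply, Prod.ext_iff, -Fintype.card_pi]
  · have : p ≠ q := fun hpq => h (hpq ▸ rfl)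
    simp [floorYall, h, this]

end SmoothingScalar

section SmoothingBlockSums

variable {N : ℕ} {κX κY : Fin N → Type} [∀ j, Fintype (κX j)] [∀ j, Fintype (κY j)]
  [∀ j, DecidableEq (κY j)] {R : Type}

lemma blockSum_univ_floorY [∀ j, Nonempty (κY j)] (j : Fin N)
    (Q : Matrix (((∀ i, κX i) × (∀ i, κY i)) × R) (((∀ i, κX i) × (∀ i, κY i)) × R) ℂ) :
    blockSum univ (floorY j Q) = blockSum univ Q := by
  ext r r'
  simp only [blockSum_apply, floorY, Matrix.of_apply, if_true, Fintype.sum_prod_type]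
  refine Finset.sum_congr rfl fun x _ => ?_
  rw [← Finset.mul_sum, Fintype.sum_sum_update j fun y => Q ((x, y), r) ((x, y), r'),
    nsmul_eq_mul, inv_mul_cancel_left₀ (Nat.cast_ne_zero.2 Fintype.card_ne_zero)]

variable [∀ j, DecidableEq (κX j)]

lemma map_LNS {M F : Type} [AddCommGroup M]
    [FunLike F (Matrix (((∀ i, κX i) × (∀ i, κY i)) × R) (((∀ i, κX i) × (∀ i, κY i)) × R) ℂ) M]
    [AddMonoidHomClass F _ M] (φ : F) (h : ∀ j Q, φ (floorY j Q) = φ (floorXY j Q))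
    (P : Matrix (((∀ i, κX i) × (∀ i, κY i)) × R) (((∀ i, κX i) × (∀ i, κY i)) × R) ℂ) :
    φ (LNS P) = φ P := by
  unfold LNS
  induction List.finRange N with
  | nil => rfl
  | cons j l ih => rw [List.foldr_cons, map_add, map_sub, h, sub_add_cancel, ih]

variable [∀ j, Nonempty (κX j)] [∀ j, Nonempty (κY j)]

lemma blockSum_univ_floorXY (j : Fin N)
    (Q : Matrix (((∀ i, κX i) × (∀ i, κY i)) × R) (((∀ i, κX i) × (∀ i, κY i)) × R) ℂ) :
    blockSum univ (floorXY j Q) = blockSum univ Q := by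
  ext r r'
  simp only [blockSum_apply, floorXY, Matrix.of_apply, and_self, if_true, Fintype.sum_prod_type,
    ← Finset.mul_sum]
  set g : (∀ i, κX i) → (∀ i, κY i) → ℂ := fun x y => Q ((x, y), r) ((x, y), r')
  have hsum : ∑ x, ∑ y, ∑ a : κX j, ∑ c : κY j,
      g (Function.update x j a) (Function.update y j c) =
        (Fintype.card (κX j) * Fintype.card (κY j) : ℂ) * ∑ x, ∑ y, g x y := by
    calc _ = ∑ x, ∑ a : κX j, ∑ y, ∑ c : κY j,
          g (Function.update x j a) (Function.update y j c) :=
          Finset.sum_congr rfl fun x _ => Finset.sum_comm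
      _ = ∑ x, ∑ a : κX j, Fintype.card (κY j) • ∑ y, g (Function.update x j a) y := by
          simp only [Fintype.sum_sum_update]
      _ = Fintype.card (κX j) • ∑ x, Fintype.card (κY j) • ∑ y, g x y :=
          Fintype.sum_sum_update j fun x => Fintype.card (κY j) • ∑ y, g x y
      _ = _ := by simp [nsmul_eq_mul, Finset.mul_sum, mul_assoc]
  rw [hsum, inv_mul_cancel_left₀]
  exact mul_ne_zero (Nat.cast_ne_zero.2 Fintype.card_ne_zero)
    (Nat.cast_ne_zero.2 Fintype.card_ne_zero)

lemma blockSum_univ_LNS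
    (P : Matrix (((∀ i, κX i) × (∀ i, κY i)) × R) (((∀ i, κX i) × (∀ i, κY i)) × R) ℂ) :
    blockSum univ (LNS P) = blockSum univ P :=
  map_LNS (blockSum univ) (fun j Q => by rw [blockSum_univ_floorY, blockSum_univ_floorXY]) P

lemma FreeCond.blockSum_univ_trB {A B : Type} [Fintype A] [DecidableEq A] [Fintype B]
    [DecidableEq B]
    {J : Matrix (((∀ i, κX i) × (∀ i, κY i)) × (A × B)) (((∀ i, κX i) × (∀ i, κY i)) × (A × B)) ℂ}
    (hJ : FreeCond J) : blockSum univ (trB J) = (Fintype.card (∀ i, κY i) : ℂ) • 1 := by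
  rw [← blockSum_univ_LNS, hJ.2.1, blockSum_smul_one, Finset.card_univ, Fintype.card_prod,
    Nat.cast_mul, mul_right_comm, mul_inv_cancel₀ (Nat.cast_ne_zero.2 Fintype.card_ne_zero),
    one_mul]

end SmoothingBlockSums

section MatchedBlocks

variable {N : ℕ} {κ : Fin N → Type} [∀ j, Fintype (κ j)] [∀ j, DecidableEq (κ j)] {R : Type}

lemma blockSum_diag_floorY_eq_floorXY (j : Fin N)
    (Q : Matrix (((∀ i, κ i) × (∀ i, κ i)) × R) (((∀ i, κ i) × (∀ i, κ i)) × R) ℂ) :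
    blockSum univ.diag (floorY j Q) = blockSum univ.diag (floorXY j Q) := by
  ext r r'
  simp only [blockSum_apply, Finset.sum_diag, floorY, floorXY, Matrix.of_apply, and_self, if_true,
    ← Finset.mul_sum]
  set h : (∀ i, κ i) → ℂ := fun z => ∑ c : κ j,
    Q ((z, Function.update z j c), r) ((z, Function.update z j c), r')
  have hsum : ∑ x, ∑ b : κ j, ∑ c : κ j, Q ((Function.update x j b, Function.update x j c), r)
      ((Function.update x j b, Function.update x j c), r') = Fintype.card (κ j) • ∑ x, h x := by
    simp_rw [← Fintype.sum_sum_update j h, h, Function.update_idem]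
  rw [hsum, nsmul_eq_mul]
  rcases eq_or_ne (Fintype.card (κ j) : ℂ) 0 with hc | hc
  · simp [hc]
  · field_simp

lemma blockSum_diag_LNS
    (P : Matrix (((∀ i, κ i) × (∀ i, κ i)) × R) (((∀ i, κ i) × (∀ i, κ i)) × R) ℂ) :
    blockSum univ.diag (LNS P) = blockSum univ.diag P :=
  map_LNS (blockSum univ.diag) blockSum_diag_floorY_eq_floorXY P

lemma blockSum_diag_floorYall
    (Q : Matrix (((∀ i, κ i) × (∀ i, κ i)) × R) (((∀ i, κ i) × (∀ i, κ i)) × R) ℂ) :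
    blockSum univ.diag (floorYall Q) = (Fintype.card (∀ i, κ i) : ℂ)⁻¹ • blockSum univ Q := by
  ext r r'
  simp [floorYall, Fintype.sum_prod_type, Finset.mul_sum, -Fintype.card_pi]

variable {A B : Type} [Fintype A] [DecidableEq A] [Fintype B] [DecidableEq B]
  {J : Matrix (((∀ i, κ i) × (∀ i, κ i)) × (A × B)) (((∀ i, κ i) × (∀ i, κ i)) × (A × B)) ℂ}

lemma FreeParCond.blockSum_univ_trB (hJ : FreeParCond J) :
    blockSum univ (trB J) = (Fintype.card (∀ i, κ i) : ℂ) • 1 :=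
  hJ.2.2.1

variable [∀ j, Nonempty (κ j)]

lemma FreeCond.blockSum_diag_trB (hJ : FreeCond J) : blockSum univ.diag (trB J) = 1 := by
  rw [← blockSum_diag_LNS, hJ.2.1, blockSum_smul_one, Finset.diag_card, Finset.card_univ,
    mul_inv_cancel₀ (Nat.cast_ne_zero.2 Fintype.card_ne_zero), one_smul]

lemma FreeParCond.blockSum_diag_trB (hJ : FreeParCond J) : blockSum univ.diag (trB J) = 1 := by
  rw [hJ.2.1, blockSum_diag_floorYall, hJ.blockSum_univ_trB, smul_smul,
    inv_mul_cancel₀ (Nat.cast_ne_zero.2 Fintype.card_ne_zero), one_smul]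

end MatchedBlocks

section Twirl

variable {X U : Type} [Fintype X] [DecidableEq X]

lemma blockSum_diag_add_offDiag (J : Matrix ((X × X) × U) ((X × X) × U) ℂ) :
    blockSum univ.diag J + blockSum univ.offDiag J = blockSum univ J := by
  ext u v
  simp only [Matrix.add_apply, blockSum_apply,
    ← Finset.sum_union (Finset.disjoint_diag_offDiag _), Finset.diag_union_offDiag,
    Finset.univ_product_univ]

/-- The average of `J` over the relabelings `(x, y) ↦ (σ x, σ y)`, `σ` a permutation of `X`,
followed by dephasing of `X × X`. -/
noncomputable def twirl (J : Matrix ((X × X) × U) ((X × X) × U) ℂ) :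
    Matrix ((X × X) × U) ((X × X) × U) ℂ :=
  blockDiag fun w => if w.1 = w.2 then (Fintype.card X : ℂ)⁻¹ • blockSum univ.diag J
    else (#(univ : Finset X).offDiag : ℂ)⁻¹ • blockSum univ.offDiag J

lemma posSemidef_twirl [Fintype U] {J : Matrix ((X × X) × U) ((X × X) × U) ℂ}
    (hJ : J.PosSemidef) : (twirl J).PosSemidef :=
  posSemidef_blockDiag fun w => by
    split_ifs <;> exact (posSemidef_blockSum hJ _).smul (inv_nonneg.2 (Nat.cast_nonneg _))

lemma blockSum_diag_twirl [Nonempty X] (J : Matrix ((X × X) × U) ((X × X) × U) ℂ) :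
    blockSum univ.diag (twirl J) = blockSum univ.diag J := by
  ext u v
  simp [twirl, Fintype.card_ne_zero]

lemma sum_twirl_apply (J : Matrix ((X × X) × U) ((X × X) × U) ℂ) (y y' : X) (u v : U) :
    ∑ x, twirl J ((x, y), u) ((x, y'), v) =
      if y = y' then (Fintype.card X : ℂ)⁻¹ * blockSum univ J u v else 0 := by
  by_cases hy : y = y'
  swap
  · simp [twirl, hy]
  subst hy
  have : Nonempty X := ⟨y⟩
  rw [Fintype.sum_eq_add_sum_compl y]
  simp only [twirl, blockDiag_apply, if_true]
  rw [Finset.sum_congr rfl fun x hx => by rw [if_neg (by simpa using hx)],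
    Finset.sum_const, Finset.card_compl, Finset.card_singleton, ← blockSum_diag_add_offDiag]
  rcases eq_or_ne (Fintype.card X) 1 with h1 | h1
  · have : univ.offDiag = (∅ : Finset (X × X)) := Finset.card_eq_zero.1 (by simp [h1])
    simp [this, h1]
  · have hm1 : (Fintype.card X : ℂ) - 1 ≠ 0 := sub_ne_zero.2 (by exact_mod_cast h1)
    have hm : (Fintype.card X : ℂ) ≠ 0 := Nat.cast_ne_zero.2 Fintype.card_ne_zero
    simp only [Matrix.add_apply, Matrix.smul_apply, smul_eq_mul, nsmul_eq_mul,
      Finset.offDiag_card, Finset.card_univ, Nat.cast_sub (Nat.le_mul_self _),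
      Nat.cast_sub Fintype.card_pos, ← mul_sub_one, Nat.cast_mul, Nat.cast_one]
    field_simp

lemma trB_twirl {A B : Type} [Fintype B] [DecidableEq A]
    {J : Matrix ((X × X) × (A × B)) ((X × X) × (A × B)) ℂ}
    (hdiag : blockSum univ.diag (trB J) = 1)
    (huniv : blockSum univ (trB J) = (Fintype.card X : ℂ) • 1) :
    trB (twirl J) = (Fintype.card X : ℂ)⁻¹ • 1 := by
  have hoff : blockSum univ.offDiag (trB J) = ((Fintype.card X : ℂ) - 1) • 1 := by
    rw [← blockSum_diag_add_offDiag, hdiag] at huniv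
    rw [sub_smul, one_smul, ← huniv, add_sub_cancel_left]
  ext ⟨w, a⟩ ⟨w', a'⟩
  rw [twirl, trB_blockDiag]
  by_cases hw : w = w'
  · subst hw
    by_cases hd : w.1 = w.2
    · simp only [if_true, hd, Matrix.smul_apply, smul_eq_mul, ← Finset.mul_sum,
        sum_blockSum_apply, hdiag]
      simp [Matrix.one_apply]
    · have hX : 1 < Fintype.card X := Fintype.one_lt_card_iff.2 ⟨_, _, hd⟩
      have hm1 : (Fintype.card X : ℂ) - 1 ≠ 0 := sub_ne_zero.2 (by exact_mod_cast hX.ne')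
      simp only [if_true, hd, if_false, Matrix.smul_apply, smul_eq_mul, ← Finset.mul_sum,
        sum_blockSum_apply, hoff]
      simp [Matrix.one_apply, Nat.cast_sub (Nat.le_mul_self _), ← mul_sub_one,
        mul_right_comm _ _ ((Fintype.card X : ℂ) - 1), hm1]
  · simp [hw]

end Twirl

section NoSignalling

variable {N : ℕ} {κ : Fin N → Type} [∀ j, Fintype (κ j)]
  {A B : Type} [Fintype A] [DecidableEq A] [Fintype B]
  {J : Matrix (((∀ i, κ i) × (∀ i, κ i)) × (A × B)) (((∀ i, κ i) × (∀ i, κ i)) × (A × B)) ℂ}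

lemma NFS.blockSum_univ_apply (hJ : NFS J) (a a' : A) (b b' : B) :
    blockSum univ J (a, b) (a', b') = if a = a' then
      (Fintype.card A : ℂ)⁻¹ * ∑ c, blockSum univ J (c, b) (c, b') else 0 := by
  simp only [blockSum_apply, Fintype.sum_prod_type_right, hJ _ _ a a' b b']
  split_ifs
  · rw [← Finset.mul_sum, Finset.sum_comm (γ := A)]
    simp only [Finset.sum_comm (γ := A)]
  · simp

variable [∀ j, DecidableEq (κ j)]

lemma NFS.twirl (hJ : NFS J) : NFS (twirl J) := by
  intro y y' a a' b b'
  rw [sum_twirl_apply, Finset.sum_comm]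
  simp only [sum_twirl_apply]
  by_cases hy : y = y'
  · simp only [hy, if_true, hJ.blockSum_univ_apply a a' b b', ← Finset.mul_sum]
    split_ifs <;> ring
  · simp [hy]

end NoSignalling

section Canonicalization

variable {N : ℕ} {κ : Fin N → Type} [∀ j, Fintype (κ j)] [∀ j, DecidableEq (κ j)]
  [∀ j, Nonempty (κ j)] {A B : Type} [Fintype A] [DecidableEq A] [Fintype B] [DecidableEq B]
  {J : Matrix (((∀ i, κ i) × (∀ i, κ i)) × (A × B)) (((∀ i, κ i) × (∀ i, κ i)) × (A × B)) ℂ}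

lemma exists_freeCond_and_freeParCond (hpsd : J.PosSemidef) (hnfs : NFS J)
    (hdiag : blockSum univ.diag (trB J) = 1)
    (huniv : blockSum univ (trB J) = (Fintype.card (∀ i, κ i) : ℂ) • 1) :
    ∃ J' : Matrix (((∀ i, κ i) × (∀ i, κ i)) × (A × B)) (((∀ i, κ i) × (∀ i, κ i)) × (A × B)) ℂ,
      FreeCond J' ∧ FreeParCond J' ∧ blockSum univ.diag J' = blockSum univ.diag J := by
  have htr := trB_twirl (J := J) hdiag huniv
  have hpsd' := posSemidef_twirl hpsd
  refine ⟨twirl J, ⟨hpsd', ?_, hnfs.twirl⟩, ⟨hpsd', ?_, ?_, hnfs.twirl⟩,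
    blockSum_diag_twirl J⟩
  · rw [htr, LNS_smul_one]
  · rw [htr, floorYall_smul_one]
  · change blockSum univ (trB (twirl J)) = _
    rw [htr, blockSum_smul_one, Finset.card_univ, Fintype.card_prod, Nat.cast_mul, mul_assoc,
      mul_inv_cancel₀ (Nat.cast_ne_zero.2 Fintype.card_ne_zero), mul_one]

lemma FreeCond.exists_freeParCond (hJ : FreeCond J) :
    ∃ J' : Matrix (((∀ i, κ i) × (∀ i, κ i)) × (A × B)) (((∀ i, κ i) × (∀ i, κ i)) × (A × B)) ℂ,
      FreeParCond J' ∧ blockSum univ.diag J' = blockSum univ.diag J :=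
  let ⟨J', _, hJ', h⟩ := exists_freeCond_and_freeParCond (J := J) hJ.1 hJ.2.2
    hJ.blockSum_diag_trB hJ.blockSum_univ_trB
  ⟨J', hJ', h⟩

lemma FreeParCond.exists_freeCond (hJ : FreeParCond J) :
    ∃ J' : Matrix (((∀ i, κ i) × (∀ i, κ i)) × (A × B)) (((∀ i, κ i) × (∀ i, κ i)) × (A × B)) ℂ,
      FreeCond J' ∧ blockSum univ.diag J' = blockSum univ.diag J :=
  let ⟨J', hJ', _, h⟩ := exists_freeCond_and_freeParCond (J := J) hJ.1 hJ.2.2.2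
    hJ.blockSum_diag_trB hJ.blockSum_univ_trB
  ⟨J', hJ', h⟩

end Canonicalization

lemma JDeltaProd_apply {n : ℕ} (mv : Fin n → ℕ) (w w' : (∀ j, Fin (mv j)) × (∀ j, Fin (mv j))) :
    JDeltaProd mv w w' = if w.1 = w.2 ∧ w'.1 = w'.2 ∧ w.1 = w'.1 then 1 else 0 := by
  rw [JDeltaProd, Matrix.of_apply, Finset.prod_boole]
  simp [funext_iff, forall_and]

lemma linkOut_JDeltaProd {n : ℕ} {mv : Fin n → ℕ} {AB : Type}
    (J : Matrix (((∀ j, Fin (mv j)) × (∀ j, Fin (mv j))) × AB)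
      (((∀ j, Fin (mv j)) × (∀ j, Fin (mv j))) × AB) ℂ) :
    linkOut J (JDeltaProd mv) = blockSum univ.diag J := by
  ext u v
  simp [linkOut, JDeltaProd_apply, Fintype.sum_prod_type, ite_and]

theorem simulation_cost_free_eq_freePar_general
    {A B : Type} [Fintype A] [DecidableEq A] [Fintype B] [DecidableEq B]
    (JC : Matrix (A × B) (A × B) ℂ)
    (ε : ℝ) :
    Real.logb 2
      (sInf { r : ℝ | ∃ (n : ℕ) (mv : Fin n → ℕ), (∀ j, 1 ≤ mv j) ∧
        (∃ J : Matrix (((∀ j, Fin (mv j)) × (∀ j, Fin (mv j))) × (A × B))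
              (((∀ j, Fin (mv j)) × (∀ j, Fin (mv j))) × (A × B)) ℂ,
          FreeCond J ∧ dDist (linkOut J (JDeltaProd mv)) JC ≤ ε) ∧
        r = ((∏ j, mv j : ℕ) : ℝ) })
    =
    Real.logb 2
      (sInf { r : ℝ | ∃ (n : ℕ) (mv : Fin n → ℕ), (∀ j, 1 ≤ mv j) ∧
        (∃ J : Matrix (((∀ j, Fin (mv j)) × (∀ j, Fin (mv j))) × (A × B))
              (((∀ j, Fin (mv j)) × (∀ j, Fin (mv j))) × (A × B)) ℂ,
          FreeParCond J ∧ dDist (linkOut J (JDeltaProd mv)) JC ≤ ε) ∧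
        r = ((∏ j, mv j : ℕ) : ℝ) }) := by
  congr 2
  ext r
  refine exists_congr fun n => exists_congr fun mv => and_congr_right fun hmv =>
    and_congr_left' ?_
  have : ∀ j, Nonempty (Fin (mv j)) := fun j => Fin.pos_iff_nonempty.1 (hmv j)
  simp only [linkOut_JDeltaProd]
  constructor
  · rintro ⟨J, hJ, hdist⟩
    obtain ⟨J', hJ', hsame⟩ := FreeCond.exists_freeParCond hJ
    exact ⟨J', hJ', hsame ▸ hdist⟩
  · rintro ⟨J, hJ, hdist⟩
    obtain ⟨J', hJ', hsame⟩ := FreeParCond.exists_freeCond hJ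
    exact ⟨J', hJ', hsame ▸ hdist⟩

theorem simulation_cost_free_eq_freePar
    {A B : Type} [Fintype A] [DecidableEq A] [Fintype B] [DecidableEq B]
    (JC : Matrix (A × B) (A × B) ℂ) (hCpsd : JC.PosSemidef)
    (hCtp : ∀ a a' : A, (∑ b : B, JC (a, b) (a', b)) = if a = a' then 1 else 0)
    (ε : ℝ) (hε : 0 ≤ ε) :
    Real.logb 2
      (sInf { r : ℝ | ∃ (n : ℕ) (mv : Fin n → ℕ), (∀ j, 1 ≤ mv j) ∧
        (∃ J : Matrix (((∀ j, Fin (mv j)) × (∀ j, Fin (mv j))) × (A × B))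
              (((∀ j, Fin (mv j)) × (∀ j, Fin (mv j))) × (A × B)) ℂ,
          FreeCond J ∧ dDist (linkOut J (JDeltaProd mv)) JC ≤ ε) ∧
        r = ((∏ j, mv j : ℕ) : ℝ) })
    =
    Real.logb 2
      (sInf { r : ℝ | ∃ (n : ℕ) (mv : Fin n → ℕ), (∀ j, 1 ≤ mv j) ∧
        (∃ J : Matrix (((∀ j, Fin (mv j)) × (∀ j, Fin (mv j))) × (A × B))
              (((∀ j, Fin (mv j)) × (∀ j, Fin (mv j))) × (A × B)) ℂ,
          FreeParCond J ∧ dDist (linkOut J (JDeltaProd mv)) JC ≤ ε) ∧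
        r = ((∏ j, mv j : ℕ) : ℝ) }) :=
  simulation_cost_free_eq_freePar_general JC ε

end ICO
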